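/- Let ρ and σ be positive semidefinite complex matrices of the same finite size and let U be a unitary matrix with UσU† = σ. Setting ω = ½(ρ + UρU†), one has D(ρ‖σ) = D(ω‖σ) + ½·D(ρ‖ω) + ½·D(UρU†‖ω), with equality in [0,+∞]. -/

import Mathlib

open scoped ENNReal ComplexOrder Matrix

/-- `Log X`: functional calculus of the real logarithm (with `log 0 = 0`)
applied to a Hermitian (in particular, positive semidefinite) matrix `X`;
defined as `0` on non-Hermitian matrices. -/
noncomputable def matLog {n : Type*} [Fintype n] [DecidableEq n]
    (X : Matrix n n ℂ) : Matrix n n ℂ :=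
  if hX : X.IsHermitian then hX.cfc Real.log else 0

/-- Lindblad's extended quantum relative entropy `D(ρ‖σ)`, with values in `[0,+∞]`:
`D(ρ‖σ) = Tr(ρ·Log ρ) − Tr(ρ·Log σ) + Tr σ − Tr ρ` if `ran ρ ⊆ ran σ`, and `+∞` otherwise. -/
noncomputable def relEnt {n : Type*} [Fintype n] [DecidableEq n]
    (ρ σ : Matrix n n ℂ) : ℝ≥0∞ :=
  open Classical in
  if LinearMap.range ρ.mulVecLin ≤ LinearMap.range σ.mulVecLin then
    ENNReal.ofReal ((ρ * matLog ρ).trace.re - (ρ * matLog σ).trace.re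
      + σ.trace.re - ρ.trace.re)
  else ∞


/-!
Diagonalise `ρ = ∑ pᵢ vᵢvᵢ†` and `σ = ∑ qⱼ wⱼwⱼ†`. Every trace in the finite part of `D(ρ‖σ)` is a
sum over pairs `(i, j)` weighted by `cᵢⱼ = |⟨vᵢ, wⱼ⟩|²`, so that
`D(ρ‖σ) = ∑ cᵢⱼ (pᵢ log pᵢ - pᵢ log qⱼ + qⱼ - pᵢ)`, and each term is nonnegative by the scalar
inequality `p log p - p log q + q - p ≥ 0` (Klein's inequality); when `qⱼ = 0` the weight `cᵢⱼ pᵢ`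
vanishes because `ran ρ ⊆ ran σ`. Range inclusions are handled through the projection `P` onto
`ker σ`: `ran A ⊆ ran σ` iff `P A = 0`.

Conjugation by `U` commutes with the functional calculus and preserves traces, so
`Tr(UρU† Log UρU†) = Tr(ρ Log ρ)` and `Log σ` is `U`-invariant. The identity is then linear in the
traces: `Tr(ω Log ω) = ½ Tr(ρ Log ω) + ½ Tr(UρU† Log ω)` cancels the cross terms of the two relative
entropies with respect to `ω`. Since `ran ρ, ran UρU† ⊆ ran ω`, and `ran ω ⊆ ran σ` iff
`ran ρ ⊆ ran σ`, either all four entropies are finite and the real identity lifts to `[0, ∞]`, or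
both sides are `∞`.
-/

namespace Matrix

section

variable {𝕜 n : Type*} [RCLike 𝕜] [Fintype n]

lemma IsHermitian.mul_eq_zero_comm {H K : Matrix n n 𝕜} (hH : H.IsHermitian) (hK : K.IsHermitian)
    (h : H * K = 0) : K * H = 0 := by
  rw [← hH.eq, ← hK.eq, ← conjTranspose_mul, h, conjTranspose_zero]

lemma PosSemidef.mulVec_eq_zero_of_add_mulVec_eq_zero {A B : Matrix n n 𝕜} (hA : A.PosSemidef)
    (hB : B.PosSemidef) {x : n → 𝕜} (hx : (A + B) *ᵥ x = 0) : A *ᵥ x = 0 := by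
  have hsum : star x ⬝ᵥ A *ᵥ x + star x ⬝ᵥ B *ᵥ x = 0 := by
    rw [← dotProduct_add, ← add_mulVec, hx, dotProduct_zero]
  refine (hA.dotProduct_mulVec_zero_iff x).mp (le_antisymm ?_ (hA.dotProduct_mulVec_nonneg x))
  rw [← hsum]
  exact le_add_of_nonneg_right (hB.dotProduct_mulVec_nonneg x)

lemma mulVecLin_smul (c : 𝕜) (A : Matrix n n 𝕜) : (c • A).mulVecLin = c • A.mulVecLin :=
  LinearMap.ext fun v => smul_mulVec c A v

lemma range_mulVecLin_smul {c : 𝕜} (hc : c ≠ 0) (A : Matrix n n 𝕜) :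
    LinearMap.range (c • A).mulVecLin = LinearMap.range A.mulVecLin := by
  rw [mulVecLin_smul, LinearMap.range_smul _ _ hc]

lemma range_smul_add_le {A B S : Matrix n n 𝕜} (c : 𝕜)
    (hA : LinearMap.range A.mulVecLin ≤ LinearMap.range S.mulVecLin)
    (hB : LinearMap.range B.mulVecLin ≤ LinearMap.range S.mulVecLin) :
    LinearMap.range (c • (A + B)).mulVecLin ≤ LinearMap.range S.mulVecLin := by
  rw [mulVecLin_smul, mulVecLin_add]
  exact (LinearMap.range_smul_le_range _ c).trans
    ((LinearMap.range_add_le _ _).trans (sup_le hA hB))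

variable [DecidableEq n]

-- Lets `cfc_cont_tac` discharge the continuity side conditions of the `cfc` lemmas below.
@[fun_prop]
lemma continuousOn_spectrum (f : ℝ → ℝ) (A : Matrix n n 𝕜) : ContinuousOn f (spectrum ℝ A) :=
  (Set.toFinite _).continuousOn f

lemma trace_diagonal_mul_mul_diagonal_mul_conjTranspose (a b : n → 𝕜) (C : Matrix n n 𝕜) :
    (diagonal a * C * diagonal b * Cᴴ).trace = ∑ i, ∑ j, ((‖C i j‖ ^ 2 : ℝ) : 𝕜) * a i * b j := by
  refine Finset.sum_congr rfl fun i _ => ?_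
  rw [diag, mul_apply]
  refine Finset.sum_congr rfl fun j _ => ?_
  rw [mul_diagonal, diagonal_mul, conjTranspose_apply, RCLike.ofReal_pow, ← RCLike.mul_conj,
    RCLike.star_def]
  ring

noncomputable def eigenOverlap {A B : Matrix n n 𝕜} (hA : A.IsHermitian) (hB : B.IsHermitian)
    (i j : n) : ℝ :=
  ‖((hA.eigenvectorUnitary : Matrix n n 𝕜)ᴴ * (hB.eigenvectorUnitary : Matrix n n 𝕜)) i j‖ ^ 2

lemma eigenOverlap_nonneg {A B : Matrix n n 𝕜} (hA : A.IsHermitian) (hB : B.IsHermitian)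
    (i j : n) : 0 ≤ eigenOverlap hA hB i j := by
  unfold eigenOverlap
  positivity

lemma trace_cfc_mul_cfc {A B : Matrix n n 𝕜} (hA : A.IsHermitian) (hB : B.IsHermitian)
    (f g : ℝ → ℝ) :
    (cfc f A * cfc g B).trace = ∑ i, ∑ j,
      ((eigenOverlap hA hB i j * f (hA.eigenvalues i) * g (hB.eigenvalues j) : ℝ) : 𝕜) := by
  set V : Matrix n n 𝕜 := (hA.eigenvectorUnitary : Matrix n n 𝕜)
  set W : Matrix n n 𝕜 := (hB.eigenvectorUnitary : Matrix n n 𝕜)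
  have hVW : (cfc f A * cfc g B).trace = (diagonal (RCLike.ofReal ∘ f ∘ hA.eigenvalues) * (Vᴴ * W)
      * diagonal (RCLike.ofReal ∘ g ∘ hB.eigenvalues) * (Vᴴ * W)ᴴ).trace := by
    rw [hA.cfc_eq, hB.cfc_eq, IsHermitian.cfc, IsHermitian.cfc, Unitary.conjStarAlgAut_apply,
      Unitary.conjStarAlgAut_apply]
    simp only [conjTranspose_mul, conjTranspose_conjTranspose, star_eq_conjTranspose,
      Matrix.mul_assoc]
    rw [trace_mul_comm]
    simp only [Matrix.mul_assoc]
    rfl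
  rw [hVW, trace_diagonal_mul_mul_diagonal_mul_conjTranspose]
  simp [eigenOverlap, V, W]

noncomputable def kerProj (A : Matrix n n 𝕜) : Matrix n n 𝕜 :=
  cfc (fun x : ℝ => if x = 0 then 1 else 0) A

lemma isHermitian_kerProj (A : Matrix n n 𝕜) : (kerProj A).IsHermitian :=
  cfc_predicate _ A

lemma kerProj_mul_self {A : Matrix n n 𝕜} (hA : A.IsHermitian) : kerProj A * A = 0 := by
  have h := cfc_mul (fun x : ℝ => if x = 0 then 1 else 0) (fun x => x) A
  have h0 : (fun x : ℝ => (if x = 0 then 1 else 0) * x) = 0 := by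
    ext x
    by_cases hx : x = 0 <;> simp [hx]
  rw [cfc_id' ℝ A, h0, cfc_zero] at h
  exact h.symm

lemma self_mul_kerProj {A : Matrix n n 𝕜} (hA : A.IsHermitian) : A * kerProj A = 0 :=
  (isHermitian_kerProj A).mul_eq_zero_comm hA (kerProj_mul_self hA)

lemma one_sub_kerProj {A : Matrix n n 𝕜} (hA : A.IsHermitian) :
    1 - kerProj A = A * cfc (fun x : ℝ => x⁻¹) A := by
  have h := cfc_mul (fun x => x) (fun x : ℝ => x⁻¹) A
  have h1 : (fun x : ℝ => x * x⁻¹) = fun x => 1 - if x = 0 then 1 else 0 := by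
    ext x
    by_cases hx : x = 0 <;> simp [hx]
  rw [cfc_id' ℝ A, h1, cfc_sub, cfc_const_one ℝ A] at h
  exact h

lemma kerProj_mul_eq_zero_iff {S : Matrix n n 𝕜} (hS : S.IsHermitian) (A : Matrix n n 𝕜) :
    kerProj S * A = 0 ↔ LinearMap.range A.mulVecLin ≤ LinearMap.range S.mulVecLin := by
  constructor
  · intro h
    have hA : A = S * (cfc (fun x : ℝ => x⁻¹) S * A) := by
      rw [← Matrix.mul_assoc, ← one_sub_kerProj hS, Matrix.sub_mul, h, Matrix.one_mul, sub_zero]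
    rw [hA, mulVecLin_mul]
    exact LinearMap.range_comp_le_range _ _
  · intro h
    refine ext_iff_mulVec.mpr fun v => ?_
    obtain ⟨w, hw⟩ := h ⟨v, rfl⟩
    rw [mulVecLin_apply, mulVecLin_apply] at hw
    rw [← mulVec_mulVec, ← hw, mulVec_mulVec, kerProj_mul_self hS, zero_mulVec, zero_mulVec]

lemma PosSemidef.range_le_range_smul_add {A B : Matrix n n 𝕜} (hA : A.PosSemidef)
    (hB : B.PosSemidef) {c : 𝕜} (hc : c ≠ 0) :
    LinearMap.range A.mulVecLin ≤ LinearMap.range (c • (A + B)).mulVecLin := by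
  have hS := hA.1.add hB.1
  rw [range_mulVecLin_smul hc, ← kerProj_mul_eq_zero_iff hS]
  refine hA.1.mul_eq_zero_comm (isHermitian_kerProj _) (ext_iff_mulVec.mpr fun v => ?_)
  rw [← mulVec_mulVec, zero_mulVec]
  refine hA.mulVec_eq_zero_of_add_mulVec_eq_zero hB ?_
  rw [mulVec_mulVec, self_mul_kerProj hS, zero_mulVec]

/-- `A P = 0` for the projection `P` onto `ker B`; expanding `Tr(A P)` in both eigenbases gives
a vanishing sum of the nonnegative terms `cᵢⱼ pᵢ [qⱼ = 0]`. -/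
lemma eigenOverlap_mul_eigenvalue_eq_zero {A B : Matrix n n 𝕜} (hA : A.PosSemidef)
    (hB : B.IsHermitian) (h : LinearMap.range A.mulVecLin ≤ LinearMap.range B.mulVecLin) (i : n)
    {j : n} (hj : hB.eigenvalues j = 0) : eigenOverlap hA.1 hB i j * hA.1.eigenvalues i = 0 := by
  let g : ℝ → ℝ := fun x => if x = 0 then 1 else 0
  have hAP : A * kerProj B = 0 :=
    (isHermitian_kerProj B).mul_eq_zero_comm hA.1 ((kerProj_mul_eq_zero_iff hB A).mpr h)
  have htr := trace_cfc_mul_cfc hA.1 hB (fun x => x) g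
  have hA_id := cfc_id' ℝ A hA.1
  rw [hA_id, show cfc g B = kerProj B from rfl, hAP, trace_zero] at htr
  have hsum : ∑ i, ∑ j, eigenOverlap hA.1 hB i j * hA.1.eigenvalues i * g (hB.eigenvalues j) = 0 :=
    by exact_mod_cast htr.symm
  have hnonneg : ∀ i j, 0 ≤ eigenOverlap hA.1 hB i j * hA.1.eigenvalues i * g (hB.eigenvalues j) :=
    fun i j => mul_nonneg (mul_nonneg (eigenOverlap_nonneg _ _ _ _) (hA.eigenvalues_nonneg i))
      (by unfold g; split_ifs <;> norm_num)
  have hi := (Finset.sum_eq_zero_iff_of_nonneg fun i _ =>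
    Finset.sum_nonneg fun j _ => hnonneg i j).mp hsum i (Finset.mem_univ i)
  have hij := (Finset.sum_eq_zero_iff_of_nonneg fun j _ => hnonneg i j).mp hi j (Finset.mem_univ j)
  simpa [g, hj] using hij

variable (u : unitary (Matrix n n 𝕜))

lemma trace_conjStarAlgAut (X : Matrix n n 𝕜) :
    (Unitary.conjStarAlgAut 𝕜 _ u X).trace = X.trace := by
  rw [Unitary.conjStarAlgAut_apply, trace_mul_cycle, Unitary.coe_star_mul_self, Matrix.one_mul]

lemma conjStarAlgAut_cfc (f : ℝ → ℝ) {A : Matrix n n 𝕜} (hA : A.IsHermitian) :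
    Unitary.conjStarAlgAut 𝕜 _ u (cfc f A) = cfc f (Unitary.conjStarAlgAut 𝕜 _ u A) :=
  StarAlgHomClass.map_cfc (S := 𝕜) _ f A (hφ := LinearMap.continuous_of_finiteDimensional
    (Unitary.conjStarAlgAut 𝕜 _ u).toAlgEquiv.toLinearMap)

lemma range_conjStarAlgAut_le {A B : Matrix n n 𝕜} (hB : B.IsHermitian)
    (h : LinearMap.range A.mulVecLin ≤ LinearMap.range B.mulVecLin) :
    LinearMap.range (Unitary.conjStarAlgAut 𝕜 _ u A).mulVecLin ≤
      LinearMap.range (Unitary.conjStarAlgAut 𝕜 _ u B).mulVecLin := by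
  rw [← kerProj_mul_eq_zero_iff hB] at h
  rw [← kerProj_mul_eq_zero_iff (IsSelfAdjoint.map hB (Unitary.conjStarAlgAut 𝕜 _ u)), kerProj,
    ← conjStarAlgAut_cfc u _ hB, ← map_mul, ← kerProj, h, map_zero]

end

end Matrix

lemma Real.mul_log_sub_mul_log_add_sub_nonneg {p q : ℝ} (hp : 0 ≤ p) (hq : 0 < q) :
    0 ≤ p * Real.log p - p * Real.log q + q - p := by
  rcases hp.eq_or_lt with rfl | hp
  · simpa using hq.le
  · have h := Real.log_le_sub_one_of_pos (div_pos hq hp)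
    rw [Real.log_div hq.ne' hp.ne'] at h
    have h' := mul_le_mul_of_nonneg_left h hp.le
    rw [mul_sub, mul_sub, mul_div_cancel₀ _ hp.ne', mul_one] at h'
    linarith

lemma ENNReal.ofReal_add_inv_two_mul_add_inv_two_mul {a b c : ℝ} (ha : 0 ≤ a) (hb : 0 ≤ b)
    (hc : 0 ≤ c) :
    ENNReal.ofReal (a + 2⁻¹ * b + 2⁻¹ * c) =
      ENNReal.ofReal a + 2⁻¹ * ENNReal.ofReal b + 2⁻¹ * ENNReal.ofReal c := by
  have h2 : ENNReal.ofReal 2⁻¹ = 2⁻¹ := by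
    rw [ENNReal.ofReal_inv_of_pos two_pos, ENNReal.ofReal_ofNat]
  rw [ENNReal.ofReal_add (by positivity) (by positivity), ENNReal.ofReal_add ha (by positivity),
    ENNReal.ofReal_mul (by norm_num), ENNReal.ofReal_mul (by norm_num), h2]

section RelEnt

open Matrix

variable {n : Type*} [Fintype n] [DecidableEq n]

lemma matLog_eq_cfc {A : Matrix n n ℂ} (hA : A.IsHermitian) : matLog A = cfc Real.log A := by
  rw [matLog, dif_pos hA, hA.cfc_eq]

lemma matLog_conjStarAlgAut (u : unitary (Matrix n n ℂ)) {A : Matrix n n ℂ} (hA : A.IsHermitian) :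
    matLog (Unitary.conjStarAlgAut ℂ _ u A) = Unitary.conjStarAlgAut ℂ _ u (matLog A) := by
  rw [matLog_eq_cfc hA, matLog_eq_cfc (IsSelfAdjoint.map hA (Unitary.conjStarAlgAut ℂ _ u)),
    conjStarAlgAut_cfc u _ hA]

lemma trace_conjStarAlgAut_mul_matLog (u : unitary (Matrix n n ℂ)) {A : Matrix n n ℂ}
    (hA : A.IsHermitian) :
    (Unitary.conjStarAlgAut ℂ _ u A * matLog (Unitary.conjStarAlgAut ℂ _ u A)).trace =
      (A * matLog A).trace := by
  rw [matLog_conjStarAlgAut u hA, ← map_mul, trace_conjStarAlgAut]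

lemma trace_conjStarAlgAut_mul_matLog_of_conjStarAlgAut_eq (u : unitary (Matrix n n ℂ))
    {σ : Matrix n n ℂ} (hσ : σ.IsHermitian) (hσu : Unitary.conjStarAlgAut ℂ _ u σ = σ)
    (A : Matrix n n ℂ) :
    (Unitary.conjStarAlgAut ℂ _ u A * matLog σ).trace = (A * matLog σ).trace := by
  conv_lhs => rw [← hσu, matLog_conjStarAlgAut u hσ, ← map_mul, trace_conjStarAlgAut]

noncomputable def relEntReal (ρ σ : Matrix n n ℂ) : ℝ :=
  (ρ * matLog ρ).trace.re - (ρ * matLog σ).trace.re + σ.trace.re - ρ.trace.re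

lemma relEnt_of_range_le {ρ σ : Matrix n n ℂ}
    (h : LinearMap.range ρ.mulVecLin ≤ LinearMap.range σ.mulVecLin) :
    relEnt ρ σ = ENNReal.ofReal (relEntReal ρ σ) := by
  rw [relEnt, if_pos h, relEntReal]

lemma relEnt_of_not_range_le {ρ σ : Matrix n n ℂ}
    (h : ¬LinearMap.range ρ.mulVecLin ≤ LinearMap.range σ.mulVecLin) : relEnt ρ σ = ⊤ := by
  rw [relEnt, if_neg h]

lemma relEntReal_eq_sum {ρ σ : Matrix n n ℂ} (hρ : ρ.IsHermitian) (hσ : σ.IsHermitian) :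
    relEntReal ρ σ = ∑ i, ∑ j, eigenOverlap hρ hσ i j *
      (hρ.eigenvalues i * Real.log (hρ.eigenvalues i)
        - hρ.eigenvalues i * Real.log (hσ.eigenvalues j)
        + hσ.eigenvalues j - hρ.eigenvalues i) := by
  have h₁ : ρ * matLog ρ = cfc (fun x => x * Real.log x) ρ * cfc (fun _ : ℝ => (1 : ℝ)) σ := by
    rw [matLog_eq_cfc hρ, cfc_mul (fun x => x) Real.log ρ, cfc_id' ℝ ρ, cfc_const_one ℝ σ,
      Matrix.mul_one]
  have h₂ : ρ * matLog σ = cfc (fun x : ℝ => x) ρ * cfc Real.log σ := by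
    rw [matLog_eq_cfc hσ, cfc_id' ℝ ρ]
  have h₃ : σ.trace = (cfc (fun _ : ℝ => (1 : ℝ)) ρ * cfc (fun x : ℝ => x) σ).trace := by
    rw [cfc_const_one ℝ ρ, cfc_id' ℝ σ, Matrix.one_mul]
  have h₄ : ρ.trace = (cfc (fun x : ℝ => x) ρ * cfc (fun _ : ℝ => (1 : ℝ)) σ).trace := by
    rw [cfc_const_one ℝ σ, cfc_id' ℝ ρ, Matrix.mul_one]
  rw [relEntReal, h₁, h₂, h₃, h₄]
  simp only [trace_cfc_mul_cfc hρ hσ, RCLike.ofReal_eq_complex_ofReal, Complex.re_sum,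
    Complex.ofReal_re, ← Finset.sum_sub_distrib, ← Finset.sum_add_distrib]
  refine Finset.sum_congr rfl fun i _ => Finset.sum_congr rfl fun j _ => ?_
  ring

lemma relEntReal_nonneg {ρ σ : Matrix n n ℂ} (hρ : ρ.PosSemidef) (hσ : σ.PosSemidef)
    (h : LinearMap.range ρ.mulVecLin ≤ LinearMap.range σ.mulVecLin) : 0 ≤ relEntReal ρ σ := by
  rw [relEntReal_eq_sum hρ.1 hσ.1]
  refine Finset.sum_nonneg fun i _ => Finset.sum_nonneg fun j _ => ?_
  rcases (hσ.eigenvalues_nonneg j).eq_or_lt with hq | hq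
  · have h0 := eigenOverlap_mul_eigenvalue_eq_zero hρ hσ.1 h i hq.symm
    rw [← hq, Real.log_zero]
    exact le_of_eq (by linear_combination (1 - Real.log (hρ.1.eigenvalues i)) * h0)
  · exact mul_nonneg (eigenOverlap_nonneg _ _ _ _)
      (Real.mul_log_sub_mul_log_add_sub_nonneg (hρ.eigenvalues_nonneg i) hq)

lemma relEntReal_midpoint {ρ ρ' σ : Matrix n n ℂ}
    (hlog : (ρ' * matLog ρ').trace = (ρ * matLog ρ).trace)
    (hlogσ : (ρ' * matLog σ).trace = (ρ * matLog σ).trace) (htr : ρ'.trace = ρ.trace) :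
    relEntReal ρ σ = relEntReal ((2⁻¹ : ℂ) • (ρ + ρ')) σ
      + 2⁻¹ * relEntReal ρ ((2⁻¹ : ℂ) • (ρ + ρ'))
      + 2⁻¹ * relEntReal ρ' ((2⁻¹ : ℂ) • (ρ + ρ')) := by
  simp only [relEntReal, Matrix.smul_mul, Matrix.add_mul, trace_smul, trace_add, hlog, hlogσ, htr,
    smul_eq_mul, Complex.mul_re, Complex.add_re]
  norm_num
  ring

end RelEnt

/-- If `U` is unitary and `UσU† = σ` then, with `ω = ½(ρ + UρU†)`,
`D(ρ‖σ) = D(ω‖σ) + ½·D(ρ‖ω) + ½·D(UρU†‖ω)` in `[0,+∞]`. -/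
theorem relEnt_unitary_mixing {n : Type*} [Fintype n] [DecidableEq n]
    (ρ σ U : Matrix n n ℂ) (hρ : ρ.PosSemidef) (hσ : σ.PosSemidef)
    (hU : U ∈ Matrix.unitaryGroup n ℂ) (hUσ : U * σ * Uᴴ = σ) :
    relEnt ρ σ
      = relEnt ((2⁻¹ : ℂ) • (ρ + U * ρ * Uᴴ)) σ
        + 2⁻¹ * relEnt ρ ((2⁻¹ : ℂ) • (ρ + U * ρ * Uᴴ))
        + 2⁻¹ * relEnt (U * ρ * Uᴴ) ((2⁻¹ : ℂ) • (ρ + U * ρ * Uᴴ)) := by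
  let u : unitary (Matrix n n ℂ) := ⟨U, hU⟩
  have hconj : ∀ X, U * X * Uᴴ = Unitary.conjStarAlgAut ℂ _ u X := fun _ => rfl
  rw [hconj] at hUσ ⊢
  set ρ' := Unitary.conjStarAlgAut ℂ _ u ρ
  set ω := (2⁻¹ : ℂ) • (ρ + ρ')
  have hρ' : ρ'.PosSemidef := hρ.mul_mul_conjTranspose_same U
  have hω : ω.PosSemidef := (hρ.add hρ').smul (by norm_num [Complex.le_def])
  have hρω : LinearMap.range ρ.mulVecLin ≤ LinearMap.range ω.mulVecLin :=
    hρ.range_le_range_smul_add hρ' (by norm_num)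
  have hρ'ω : LinearMap.range ρ'.mulVecLin ≤ LinearMap.range ω.mulVecLin := by
    have h := hρ'.range_le_range_smul_add hρ (c := (2⁻¹ : ℂ)) (by norm_num)
    rwa [add_comm] at h
  by_cases h : LinearMap.range ρ.mulVecLin ≤ LinearMap.range σ.mulVecLin
  · have hρ'σ := Matrix.range_conjStarAlgAut_le u hσ.1 h
    rw [hUσ] at hρ'σ
    have hωσ := Matrix.range_smul_add_le (2⁻¹ : ℂ) h hρ'σ
    rw [relEnt_of_range_le h, relEnt_of_range_le hωσ, relEnt_of_range_le hρω,
      relEnt_of_range_le hρ'ω, relEntReal_midpoint (trace_conjStarAlgAut_mul_matLog u hρ.1)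
        (trace_conjStarAlgAut_mul_matLog_of_conjStarAlgAut_eq u hσ.1 hUσ ρ)
        (Matrix.trace_conjStarAlgAut u ρ)]
    exact ENNReal.ofReal_add_inv_two_mul_add_inv_two_mul (relEntReal_nonneg hω hσ hωσ)
      (relEntReal_nonneg hρ hω hρω) (relEntReal_nonneg hρ' hω hρ'ω)
  · rw [relEnt_of_not_range_le h, relEnt_of_not_range_le fun hωσ => h (hρω.trans hωσ),
      top_add, top_add]
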